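/- Root count for the Bryan/Lindblom–Ipser eigenvalue equation: define the Legendre polynomial by Rodrigues' formula P_l(x) = (1/(2^l l!)) · (d/dx)^l (x² − 1)^l and the associated Legendre function by P_l^m(x) = (1 − x²)^{m/2} · (d/dx)^m P_l(x) for x ∈ (−1,1). Let m ≥ 1 and l₀ ≥ m be integers and define f : (−2, 2) → ℝ by f(κ) = (4 − κ²) · (d/dκ)[P_{l₀+1}^m(κ/2)] − 2m · P_{l₀+1}^m(κ/2). Then f has exactly l₀ − m + 1 distinct zeros in the interval (−2, 2). (These zeros are the lowest-order dimensionless rotating-frame eigenfrequencies κ₀ of the hybrid modes of a slowly and uniformly rotating uniform-density star, so for given m > 0 and terminating index l₀ there are exactly l₀ − m + 1 such modes.) -/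

import Mathlib

noncomputable section

/-- The Legendre polynomial, via Rodrigues' formula
`P_l(x) = (1/(2^l l!)) (d/dx)^l (x² − 1)^l`. -/
def legendreP (l : ℕ) (x : ℝ) : ℝ :=
  (1 / (2 ^ l * (Nat.factorial l : ℝ))) *
    iteratedDeriv l (fun t : ℝ => (t ^ 2 - 1) ^ l) x

/-- The associated Legendre function
`P_l^m(x) = (1 − x²)^{m/2} (d/dx)^m P_l(x)` for `x ∈ (−1,1)`. -/
def assocLegendreP (l m : ℕ) (x : ℝ) : ℝ :=
  (1 - x ^ 2) ^ ((m : ℝ) / 2) * iteratedDeriv m (legendreP l) x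

open Polynomial Set

/-!
Put `l = l₀ + 1`, `x = κ / 2` and `v = P_l⁽ᵐ⁾`, a polynomial of degree `l - m`. Differentiating
`(1 - x²)^{m/2} v(x)` gives `f(κ) = 2 (1 - x²)^{m/2} (1 + x) R(x)` with `R = (1 - x) v' - m v`,
and `(1 - x)^{m-1} R` is the derivative of `(1 - x)^m v`.

Zeros are counted by Rolle's theorem: `(x² - 1)^l` vanishes to order `l` at `±1`, so `P_l` has
`l` zeros in `(-1, 1)` and `v` has `l - m = deg v` of them. Together with the zero `x = 1` of
`(1 - x)^m v`, one more application of Rolle gives `l - m` zeros of `R` in `(-1, 1)`, and since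
`deg R = l - m` there are no others.
-/

theorem ncard_zeros_le_ncard_deriv_zeros_interior_add_one {f : ℝ → ℝ} {s : Set ℝ}
    (hs : s.OrdConnected) (hf : ContinuousOn f s)
    (hfin : {x ∈ interior s | deriv f x = 0}.Finite) :
    {x ∈ s | f x = 0}.ncard ≤ {x ∈ interior s | deriv f x = 0}.ncard + 1 := by
  by_cases hZ : {x ∈ s | f x = 0}.Finite
  swap
  · simp [Set.Infinite.ncard hZ]
  rw [ncard_eq_toFinset_card _ hZ, ncard_eq_toFinset_card _ hfin]
  refine Finset.card_le_of_interleaved fun x hx y hy hxy _ => ?_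
  simp only [Finite.mem_toFinset, mem_ofPred_eq] at hx hy ⊢
  have hxy_s : Icc x y ⊆ s := hs.out hx.1 hy.1
  obtain ⟨z, hz, hz0⟩ := exists_deriv_eq_zero hxy (hf.mono hxy_s) (hx.2.trans hy.2.symm)
  refine ⟨z, ⟨interior_mono hxy_s ?_, hz0⟩, hz⟩
  rwa [interior_Icc]

namespace Polynomial

theorem natDegree_iterate_derivative_eq {R : Type*} [Semiring R] [IsAddTorsionFree R]
    (p : R[X]) (k : ℕ) : (derivative^[k] p).natDegree = p.natDegree - k := by
  induction k with
  | zero => rfl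
  | succ k ih => rw [Function.iterate_succ_apply', natDegree_derivative, ih, Nat.sub_sub]

theorem iteratedDeriv_eval (p : ℝ[X]) (k : ℕ) :
    iteratedDeriv k (fun x => p.eval x) = fun x => (derivative^[k] p).eval x := by
  induction k with
  | zero => simp
  | succ k ih =>
    ext x
    rw [iteratedDeriv_succ, ih, Function.iterate_succ_apply', Polynomial.deriv]

theorem finite_zeros {p : ℝ[X]} (hp : p ≠ 0) (s : Set ℝ) : {x ∈ s | p.eval x = 0}.Finite :=
  (finite_setOfPred_isRoot hp).subset fun _ hx => hx.2

theorem ncard_zeros_le_natDegree {p : ℝ[X]} (hp : p ≠ 0) (s : Set ℝ) :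
    {x ∈ s | p.eval x = 0}.ncard ≤ p.natDegree := by
  classical
  calc {x ∈ s | p.eval x = 0}.ncard ≤ (p.roots.toFinset : Set ℝ).ncard :=
        ncard_le_ncard (fun x hx => by simpa [mem_roots hp] using hx.2) (Finset.finite_toSet _)
    _ ≤ Multiset.card p.roots := by rw [ncard_coe_finset]; exact Multiset.toFinset_card_le _
    _ ≤ p.natDegree := card_roots' p

theorem zeros_mul_eq_of_forall_eval_ne_zero {p q : ℝ[X]} {s : Set ℝ}
    (hq : ∀ x ∈ s, q.eval x ≠ 0) :
    {x ∈ s | (q * p).eval x = 0} = {x ∈ s | p.eval x = 0} := by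
  ext x
  simp only [mem_ofPred_eq, eval_mul, and_congr_right_iff]
  exact fun hx => mul_eq_zero_iff_left (hq x hx)

theorem ncard_zeros_insert {p : ℝ[X]} (hp : p ≠ 0) {s : Set ℝ} {b : ℝ} (hb : b ∉ s)
    (hpb : p.eval b = 0) :
    {x ∈ insert b s | p.eval x = 0}.ncard = {x ∈ s | p.eval x = 0}.ncard + 1 := by
  have : {x ∈ insert b s | p.eval x = 0} = insert b {x ∈ s | p.eval x = 0} := by
    ext x
    simp only [mem_insert_iff, mem_ofPred_eq]
    constructor
    · rintro ⟨rfl | hx, h⟩ <;> simp_all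
    · rintro (rfl | ⟨hx, h⟩) <;> simp_all
  rw [this, ncard_insert_of_notMem (fun h => hb h.1) (finite_zeros hp s)]

theorem ncard_zeros_le_ncard_derivative_zeros_interior_add_one {p : ℝ[X]}
    (hp : derivative p ≠ 0) {s : Set ℝ} (hs : s.OrdConnected) :
    {x ∈ s | p.eval x = 0}.ncard ≤
      {x ∈ interior s | (derivative p).eval x = 0}.ncard + 1 := by
  have hfin : {x ∈ interior s | deriv (fun y => p.eval y) x = 0}.Finite := by
    simpa only [Polynomial.deriv] using finite_zeros hp _
  simpa only [Polynomial.deriv] using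
    ncard_zeros_le_ncard_deriv_zeros_interior_add_one hs p.continuousOn hfin

theorem ncard_zeros_Ioo_le_iterate_derivative (p : ℝ[X]) (a b : ℝ) {k : ℕ}
    (hk : k ≤ p.natDegree) :
    {x ∈ Ioo a b | p.eval x = 0}.ncard ≤
      {x ∈ Ioo a b | (derivative^[k] p).eval x = 0}.ncard + k := by
  induction k with
  | zero => simp
  | succ k ih =>
    have hk' : derivative (derivative^[k] p) ≠ 0 := by
      rw [derivative_ne_zero, natDegree_iterate_derivative_eq]; omega
    have hrolle := ncard_zeros_le_ncard_derivative_zeros_interior_add_one hk'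
      (ordConnected_Ioo : (Ioo a b).OrdConnected)
    rw [interior_Ioo] at hrolle
    rw [Function.iterate_succ_apply']
    have := ih (by omega)
    omega

theorem natDegree_X_sq_sub_one_pow (l : ℕ) : ((X ^ 2 - 1 : ℝ[X]) ^ l).natDegree = 2 * l := by
  rw [natDegree_pow, ← C_1, natDegree_X_pow_sub_C, mul_comm]

theorem eval_iterate_derivative_X_sq_sub_one_pow_eq_zero {l k : ℕ} (hk : k < l) {x : ℝ}
    (hx : x ^ 2 = 1) : (derivative^[k] ((X ^ 2 - 1 : ℝ[X]) ^ l)).eval x = 0 := by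
  obtain ⟨q, hq⟩ := pow_sub_dvd_iterate_derivative_pow (X ^ 2 - 1 : ℝ[X]) l k
  rw [hq, eval_mul, eval_pow]
  simp [hx, Nat.sub_ne_zero_of_lt hk]

theorem le_ncard_zeros_iterate_derivative_X_sq_sub_one_pow {l k : ℕ} (hk : k ≤ l) :
    k ≤ {x ∈ Ioo (-1 : ℝ) 1 |
      (derivative^[k] ((X ^ 2 - 1 : ℝ[X]) ^ l)).eval x = 0}.ncard := by
  induction k with
  | zero => exact Nat.zero_le _
  | succ k ih =>
    rw [Function.iterate_succ_apply']
    set p := derivative^[k] ((X ^ 2 - 1 : ℝ[X]) ^ l)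
    have hdeg : p.natDegree = 2 * l - k := by
      rw [natDegree_iterate_derivative_eq, natDegree_X_sq_sub_one_pow]
    have hp : p ≠ 0 := fun h => by simp [h] at hdeg; omega
    have hp' : derivative p ≠ 0 := by rw [derivative_ne_zero]; omega
    have hIcc : Icc (-1 : ℝ) 1 = insert (-1) (insert 1 (Ioo (-1) 1)) := by
      rw [Ioo_insert_right (by norm_num), Ioc_insert_left (by norm_num)]
    have hends : {x ∈ Icc (-1 : ℝ) 1 | p.eval x = 0}.ncard =
        {x ∈ Ioo (-1 : ℝ) 1 | p.eval x = 0}.ncard + 2 := by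
      rw [hIcc, ncard_zeros_insert hp (by norm_num)
          (eval_iterate_derivative_X_sq_sub_one_pow_eq_zero hk (by norm_num)),
        ncard_zeros_insert hp (by simp)
          (eval_iterate_derivative_X_sq_sub_one_pow_eq_zero hk (by norm_num))]
    have hrolle := ncard_zeros_le_ncard_derivative_zeros_interior_add_one hp'
      (ordConnected_Icc : (Icc (-1 : ℝ) 1).OrdConnected)
    rw [interior_Icc, hends] at hrolle
    have := ih (by omega)
    omega

theorem derivative_one_sub_X_pow_mul {R : Type*} [CommRing R] (v : R[X]) {m : ℕ}
    (hm : 1 ≤ m) :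
    derivative ((1 - X) ^ m * v) =
      (1 - X) ^ (m - 1) * ((1 - X) * derivative v - C (m : R) * v) := by
  obtain ⟨n, rfl⟩ := Nat.exists_eq_add_of_le' hm
  rw [derivative_mul, derivative_pow, Nat.add_sub_cancel]
  simp only [derivative_sub, derivative_one, derivative_X, Nat.cast_add, Nat.cast_one, C_add, C_1]
  ring

theorem natDegree_one_sub_X : (1 - X : ℝ[X]).natDegree = 1 := by
  rw [← neg_sub, natDegree_neg, ← C_1, natDegree_X_sub_C]

theorem ncard_zeros_one_sub_X_mul_derivative_sub {v : ℝ[X]} (hv : v ≠ 0) {m : ℕ}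
    (hm : 1 ≤ m) (hroots : v.natDegree ≤ {x ∈ Ioo (-1 : ℝ) 1 | v.eval x = 0}.ncard) :
    {x ∈ Ioo (-1 : ℝ) 1 | ((1 - X) * derivative v - C (m : ℝ) * v).eval x = 0}.ncard =
      v.natDegree := by
  set R := (1 - X) * derivative v - C (m : ℝ) * v
  set F := (1 - X) ^ m * v
  have hX : (1 - X : ℝ[X]) ≠ 0 := fun h => by simpa [h] using natDegree_one_sub_X
  have hpos (k : ℕ) : ∀ x ∈ Ioo (-1 : ℝ) 1, ((1 - X : ℝ[X]) ^ k).eval x ≠ 0 :=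
    fun x hx => by simpa [sub_eq_zero] using pow_ne_zero k (sub_ne_zero.2 hx.2.ne')
  have hF : F.natDegree = m + v.natDegree := by
    rw [natDegree_mul (pow_ne_zero _ hX) hv, natDegree_pow, natDegree_one_sub_X, mul_one]
  have hF' : derivative F = (1 - X) ^ (m - 1) * R := derivative_one_sub_X_pow_mul v hm
  have hF'ne : derivative F ≠ 0 := derivative_ne_zero.2 (by omega)
  have hR : R ≠ 0 := right_ne_zero_of_mul (hF' ▸ hF'ne)
  have hIoc : {x ∈ Ioc (-1 : ℝ) 1 | F.eval x = 0}.ncard =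
      {x ∈ Ioo (-1 : ℝ) 1 | v.eval x = 0}.ncard + 1 := by
    rw [← Ioo_insert_right (by norm_num), ncard_zeros_insert (mul_ne_zero (pow_ne_zero _ hX) hv)
      (by simp) (by simp; omega), zeros_mul_eq_of_forall_eval_ne_zero (hpos m)]
  have hrolle := ncard_zeros_le_ncard_derivative_zeros_interior_add_one hF'ne
    (ordConnected_Ioc : (Ioc (-1 : ℝ) 1).OrdConnected)
  rw [interior_Ioc, hF', zeros_mul_eq_of_forall_eval_ne_zero (hpos (m - 1)), hIoc] at hrolle
  have hRdeg : R.natDegree = v.natDegree := by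
    have := congrArg natDegree hF'
    rw [natDegree_derivative, hF, natDegree_mul (pow_ne_zero _ hX) hR, natDegree_pow,
      natDegree_one_sub_X] at this
    omega
  have := ncard_zeros_le_natDegree hR (Ioo (-1) 1)
  omega

end Polynomial

def legendrePoly (l : ℕ) : ℝ[X] :=
  C (1 / (2 ^ l * (l.factorial : ℝ))) * derivative^[l] ((X ^ 2 - 1) ^ l)

theorem legendreP_eq_eval (l : ℕ) : legendreP l = fun x => (legendrePoly l).eval x := by
  have hQ : (fun t : ℝ => (t ^ 2 - 1) ^ l) = fun t => ((X ^ 2 - 1) ^ l : ℝ[X]).eval t := by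
    simp
  ext x
  rw [legendreP, hQ, iteratedDeriv_eval, legendrePoly, eval_mul, eval_C]

theorem assocLegendreP_eq (l m : ℕ) (x : ℝ) :
    assocLegendreP l m x =
      (1 - x ^ 2) ^ ((m : ℝ) / 2) * (derivative^[m] (legendrePoly l)).eval x := by
  rw [assocLegendreP, legendreP_eq_eval, iteratedDeriv_eval]

theorem natDegree_legendrePoly (l : ℕ) : (legendrePoly l).natDegree = l := by
  rw [legendrePoly, natDegree_C_mul (by positivity), natDegree_iterate_derivative_eq,
    natDegree_X_sq_sub_one_pow]
  omega

theorem le_ncard_zeros_legendrePoly (l : ℕ) :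
    l ≤ {x ∈ Ioo (-1 : ℝ) 1 | (legendrePoly l).eval x = 0}.ncard := by
  rw [legendrePoly, zeros_mul_eq_of_forall_eval_ne_zero fun x _ => by simp; positivity]
  exact le_ncard_zeros_iterate_derivative_X_sq_sub_one_pow le_rfl

theorem natDegree_iterate_derivative_legendrePoly_le_ncard_zeros (l m : ℕ) :
    (derivative^[m] (legendrePoly l)).natDegree ≤
      {x ∈ Ioo (-1 : ℝ) 1 | (derivative^[m] (legendrePoly l)).eval x = 0}.ncard := by
  rw [natDegree_iterate_derivative_eq, natDegree_legendrePoly]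
  rcases le_or_gt m l with hml | hlm
  · have hrolle := ncard_zeros_Ioo_le_iterate_derivative (legendrePoly l) (-1) 1
      (k := m) (by rwa [natDegree_legendrePoly])
    have := le_ncard_zeros_legendrePoly l
    omega
  · simp [Nat.sub_eq_zero_of_le hlm.le]

theorem four_sub_sq_mul_deriv_sub (v : ℝ[X]) (m : ℕ) {κ : ℝ}
    (hκ : κ ∈ Ioo (-2 : ℝ) 2) :
    (4 - κ ^ 2) * deriv (fun t => (1 - (t / 2) ^ 2) ^ ((m : ℝ) / 2) * v.eval (t / 2)) κ
        - 2 * m * ((1 - (κ / 2) ^ 2) ^ ((m : ℝ) / 2) * v.eval (κ / 2)) =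
      2 * (1 - (κ / 2) ^ 2) ^ ((m : ℝ) / 2) * (1 + κ / 2) *
        ((1 - X) * derivative v - C (m : ℝ) * v).eval (κ / 2) := by
  have hx1 : 0 < 1 - (κ / 2) ^ 2 := by nlinarith [hκ.1, hκ.2]
  set r : ℝ := m / 2
  set x := κ / 2
  have hweight : HasDerivAt (fun y : ℝ => (1 - y ^ 2) ^ r)
      (-(2 * x) * r * (1 - x ^ 2) ^ (r - 1)) x := by
    simpa using ((hasDerivAt_pow 2 x).const_sub 1).rpow_const (p := r) (Or.inl hx1.ne')
  have hderiv : HasDerivAt (fun t => (1 - (t / 2) ^ 2) ^ r * v.eval (t / 2))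
      ((-(2 * x) * r * (1 - x ^ 2) ^ (r - 1) * v.eval x +
        (1 - x ^ 2) ^ r * (derivative v).eval x) * (1 / 2)) κ := by
    exact (hweight.mul (v.hasDerivAt x)).comp κ ((hasDerivAt_id' κ).div_const 2)
  rw [hderiv.deriv, Real.rpow_sub_one hx1.ne']
  simp only [eval_sub, eval_mul, eval_one, eval_X, eval_C]
  field_simp
  ring

theorem ncard_zeros_Ioo_neg_two_two_eq {f g : ℝ → ℝ}
    (h : ∀ κ ∈ Ioo (-2 : ℝ) 2, f κ = 0 ↔ g (κ / 2) = 0) :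
    {κ ∈ Ioo (-2 : ℝ) 2 | f κ = 0}.ncard = {x ∈ Ioo (-1 : ℝ) 1 | g x = 0}.ncard := by
  have himage :
      {κ ∈ Ioo (-2 : ℝ) 2 | f κ = 0} = (2 * ·) '' {x ∈ Ioo (-1 : ℝ) 1 | g x = 0} := by
    ext κ
    constructor
    · rintro ⟨hκ, hfκ⟩
      have hκ2 : κ / 2 ∈ Ioo (-1 : ℝ) 1 := ⟨by linarith [hκ.1], by linarith [hκ.2]⟩
      exact ⟨κ / 2, ⟨hκ2, (h κ hκ).1 hfκ⟩, by ring⟩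
    · rintro ⟨x, ⟨hx, hgx⟩, rfl⟩
      have h2x : 2 * x ∈ Ioo (-2 : ℝ) 2 := ⟨by linarith [hx.1], by linarith [hx.2]⟩
      exact ⟨h2x, (h _ h2x).2 (by rwa [mul_div_cancel_left₀ _ two_ne_zero])⟩
  rw [himage, ncard_image_of_injective _ (mul_right_injective₀ two_ne_zero)]

/-- Root count for the Bryan/Lindblom–Ipser eigenvalue equation: for integers
`m ≥ 1` and `l₀ ≥ m`, the function
`f(κ) = (4 − κ²) (d/dκ)[P_{l₀+1}^m(κ/2)] − 2m P_{l₀+1}^m(κ/2)`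
has exactly `l₀ − m + 1` distinct zeros in the interval `(−2, 2)`.  These
zeros are the lowest-order dimensionless rotating-frame eigenfrequencies
`κ₀` of the hybrid modes of a slowly and uniformly rotating uniform-density
star. -/
theorem bryan_lindblom_ipser_root_count (m l₀ : ℕ) (hm : 1 ≤ m)
    (hl₀ : m ≤ l₀) (f : ℝ → ℝ)
    (hf : ∀ κ ∈ Set.Ioo (-2 : ℝ) 2,
      f κ = (4 - κ ^ 2) * deriv (fun t : ℝ => assocLegendreP (l₀ + 1) m (t / 2)) κ
        - 2 * (m : ℝ) * assocLegendreP (l₀ + 1) m (κ / 2)) :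
    {κ ∈ Set.Ioo (-2 : ℝ) 2 | f κ = 0}.ncard = l₀ - m + 1 := by
  set v := derivative^[m] (legendrePoly (l₀ + 1))
  have hv : v.natDegree = l₀ + 1 - m := by
    rw [natDegree_iterate_derivative_eq, natDegree_legendrePoly]
  have hv0 : v ≠ 0 := fun h => by simp [h] at hv; omega
  set R := (1 - X) * derivative v - C (m : ℝ) * v with hR
  have hzeros (κ) (hκ : κ ∈ Ioo (-2 : ℝ) 2) : f κ = 0 ↔ R.eval (κ / 2) = 0 := by
    have hw : 0 < 1 - (κ / 2) ^ 2 := by nlinarith [hκ.1, hκ.2]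
    have hpref : 2 * (1 - (κ / 2) ^ 2) ^ ((m : ℝ) / 2) * (1 + κ / 2) ≠ 0 := by
      have := Real.rpow_pos_of_pos hw ((m : ℝ) / 2)
      have : 0 < 1 + κ / 2 := by linarith [hκ.1]
      positivity
    simp only [hf κ hκ, assocLegendreP_eq]
    rw [four_sub_sq_mul_deriv_sub _ m hκ]
    exact mul_eq_zero_iff_left hpref
  rw [ncard_zeros_Ioo_neg_two_two_eq (g := (R.eval ·)) hzeros, hR,
    ncard_zeros_one_sub_X_mul_derivative_sub hv0 hm
      (natDegree_iterate_derivative_legendrePoly_le_ncard_zeros _ _), hv]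
  omega
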